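/- In Example 5.3's self-similar ultragraph (ℤ, U, φ), suppose n ∈ ℤ \ {0} satisfies n·x = x for all infinite paths x with r(x) = {v₀}. Then writing t = ½(φ(1,e₀)+φ(1,e₁)), for every path α of length k ≥ 1 with r(α) ∈ {{v₀},{v₁}} consisting of edges in {e₀,e₁}, one has φ(n, α) = n·t^k. -/

import Mathlib

/-!
Even elements of `ℤ` act trivially on edges, so the cocycle identity makes
`k ↦ φ(2k, e)` additive, i.e. `φ(2k, e) = k · φ(2, e)`; and `φ(2, e) = φ(1, e₀) + φ(1, e₁) = 2t`
by the cocycle identity at `1 + 1`. Hence `φ(m, e) = m t` for every even `m`, which is again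
even, and iterating along a path gives `φ(m, α) = m tᵏ`. Finally `n` is even because `n` fixes
the infinite path `e₀e₀e₀⋯`, whose first edge `n·e₀ = e_{[n]₂}` must be `e₀`.
-/

/-- The vertices `v₀, v₁, w` of the ultragraph of Example 5.3. -/
inductive Vx | v0 | v1 | w
deriving DecidableEq

/-- The edges `e₀, e₁, f` of the ultragraph of Example 5.3. -/
inductive Ed | e0 | e1 | f
deriving DecidableEq

/-- Range map: `r(e₀) = {v₀}`, `r(e₁) = {v₁}`, `r(f) = {w}`. -/
def rE : Ed → Vx
  | .e0 => .v0
  | .e1 => .v1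
  | .f => .w

/-- Source map: `s(e₀) = s(e₁) = s(f) = {v₀, v₁}`. -/
def sE : Ed → Set Vx
  | .e0 => {Vx.v0, Vx.v1}
  | .e1 => {Vx.v0, Vx.v1}
  | .f => {Vx.v0, Vx.v1}

/-- The `ℤ`-action on vertices: `n·v₀ = v_{[n]₂}`, `n·v₁ = v_{[n+1]₂}`, `n·w = w`. -/
def actVx (n : ℤ) : Vx → Vx
  | .v0 => if Even n then .v0 else .v1
  | .v1 => if Even n then .v1 else .v0
  | .w => .w

/-- The `ℤ`-action on edges: `n·e₀ = e_{[n]₂}`, `n·e₁ = e_{[n+1]₂}`, `n·f = f`. -/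
def actEd (n : ℤ) : Ed → Ed
  | .e0 => if Even n then .e0 else .e1
  | .e1 => if Even n then .e1 else .e0
  | .f => .f

/-- The cocycle extended to finite paths: `φ(g, eα) = φ(φ(g,e), α)`. -/
def cocP (φ : ℤ → Ed → ℤ) : ℤ → List Ed → ℤ
  | g, [] => g
  | g, e :: l => cocP φ (φ g e) l

theorem actEd_of_even {n : ℤ} (hn : Even n) (e : Ed) : actEd n e = e := by
  cases e <;> simp [actEd, hn]

theorem actEd_one_e0 : actEd 1 Ed.e0 = Ed.e1 := by
  simp [actEd]

theorem actEd_one_e1 : actEd 1 Ed.e1 = Ed.e0 := by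
  simp [actEd]

theorem even_of_actEd_e0 {n : ℤ} (h : actEd n Ed.e0 = Ed.e0) : Even n := by
  by_contra hn
  simp [actEd, hn] at h

section Cocycle

variable {φ : ℤ → Ed → ℤ} (hcoc : ∀ m n e, φ (m + n) e = φ m (actEd n e) + φ n e)
include hcoc

theorem cocycle_add_of_even (m : ℤ) {k : ℤ} (hk : Even k) (e : Ed) :
    φ (m + k) e = φ m e + φ k e := by
  rw [hcoc, actEd_of_even hk]

theorem cocycle_two_mul (k : ℤ) (e : Ed) : φ (2 * k) e = k * φ 2 e := by
  let f : ℤ →+ ℤ := AddMonoidHom.mk' (fun k => φ (2 * k) e) fun a b => by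
    simpa only [mul_add] using cocycle_add_of_even hcoc (2 * a) (even_two_mul b) e
  simpa [f] using map_zsmul f k 1

theorem cocycle_two_of_ne_f {e : Ed} (he : e ≠ Ed.f) : φ 2 e = φ 1 Ed.e0 + φ 1 Ed.e1 := by
  have h := hcoc 1 1 e
  rw [one_add_one_eq_two] at h
  cases e with
  | e0 => rw [actEd_one_e0] at h; linear_combination h
  | e1 => rw [actEd_one_e1] at h; linear_combination h
  | f => exact absurd rfl he

variable {t : ℤ} (ht : 2 * t = φ 1 Ed.e0 + φ 1 Ed.e1)
include ht

theorem cocycle_of_even {m : ℤ} (hm : Even m) {e : Ed} (he : e ≠ Ed.f) : φ m e = m * t := by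
  obtain ⟨k, rfl⟩ := hm
  rw [← two_mul, cocycle_two_mul hcoc, cocycle_two_of_ne_f hcoc he, ← ht]
  ring

theorem cocP_of_even {l : List Ed} (hl : ∀ e ∈ l, e ≠ Ed.f) {m : ℤ} (hm : Even m) :
    cocP φ m l = m * t ^ l.length := by
  induction l generalizing m with
  | nil => simp [cocP]
  | cons e l ih =>
    rw [cocP, cocycle_of_even hcoc ht hm (hl e List.mem_cons_self),
      ih (fun x hx => hl x (List.mem_cons_of_mem e hx)) (hm.mul_right t)]
    simp only [List.length_cons]
    ring

end Cocycle

theorem ex53_cocycle_on_paths_general (φ : ℤ → Ed → ℤ)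
    (hcoc : ∀ m n e, φ (m + n) e = φ m (actEd n e) + φ n e)
    (n : ℤ)
    (hfix : ∀ x : ℕ → Ed, (∀ k, rE (x (k + 1)) ∈ sE (x k)) → rE (x 0) = Vx.v0 →
      ∀ gs : ℕ → ℤ, gs 0 = n → (∀ k, gs (k + 1) = φ (gs k) (x k)) →
        ∀ k, actEd (gs k) (x k) = x k)
    (t : ℤ) (ht : 2 * t = φ 1 Ed.e0 + φ 1 Ed.e1) :
    ∀ α : List Ed, α ≠ [] → List.Chain' (fun e e' => rE e' ∈ sE e) α →
      (∀ e ∈ α, e ≠ Ed.f) → cocP φ n α = n * t ^ α.length := by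
  have hn : Even n := even_of_actEd_e0 <|
    hfix (fun _ => Ed.e0) (fun _ => by simp [rE, sE]) rfl
      (fun k => Nat.rec n (fun _ g => φ g Ed.e0) k) rfl (fun _ => rfl) 0
  intro α _ _ hα
  exact cocP_of_even hcoc ht hα hn

/-- Example 5.3: suppose `n ≠ 0` satisfies `n·x = x` for all infinite paths `x` with
`r(x) = {v₀}`. Writing `t = ½(φ(1,e₀) + φ(1,e₁))`, for every path `α` of length
`k ≥ 1` consisting of edges in `{e₀, e₁}` (so `r(α) ∈ {{v₀},{v₁}}`), one has
`φ(n, α) = n·tᵏ`. -/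
theorem ex53_cocycle_on_paths (φ : ℤ → Ed → ℤ)
    (hcoc : ∀ m n e, φ (m + n) e = φ m (actEd n e) + φ n e)
    (hres : ∀ n e, actVx (φ n e) '' sE e ⊆ actVx n '' sE e)
    (n : ℤ) (hn : n ≠ 0)
    (hfix : ∀ x : ℕ → Ed, (∀ k, rE (x (k + 1)) ∈ sE (x k)) → rE (x 0) = Vx.v0 →
      ∀ gs : ℕ → ℤ, gs 0 = n → (∀ k, gs (k + 1) = φ (gs k) (x k)) →
        ∀ k, actEd (gs k) (x k) = x k)
    (t : ℤ) (ht : 2 * t = φ 1 Ed.e0 + φ 1 Ed.e1) :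
    ∀ α : List Ed, α ≠ [] → List.Chain' (fun e e' => rE e' ∈ sE e) α →
      (∀ e ∈ α, e ≠ Ed.f) → cocP φ n α = n * t ^ α.length :=
  ex53_cocycle_on_paths_general φ hcoc n hfix t ht
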